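/- Nonnegativity of the weight degradation: for every m ∈ [0,1], κ ∈ (0,1) and h ∈ [0,1], the inequality (m·κ^{(1−h)²} + (1−m)·κ^{h²})² ≤ m² + (1−m)² + 2m(1−m)κ holds; consequently WD(m,κ) = m² + (1−m)² + 2m(1−m)κ − (sup_{h ∈ [0,1]} s_{m,κ}(h))² ≥ 0. -/

import Mathlib

/-!
`s m κ h` is the inner product `⟪f, k_h⟫` in the reproducing kernel Hilbert space of the Gaussian
kernel `k(x, y) = κ ^ (x - y)²`, where `f = m k_1 + (1 - m) k_0` has squared norm
`m² + (1 - m)² + 2 m (1 - m) κ` and `‖k_h‖ = 1`; the bound is Cauchy–Schwarz. Concretely, it is the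
nonnegativity of the kernel's quadratic form at the points `1, 0, h` with coefficients
`m, 1 - m, -s m κ h`, which equals `‖f‖² - (s m κ h)²`. The Gaussian kernel is positive semidefinite
because `exp (-t (x - y)²) = exp (-t x²) exp (-t y²) exp (2 t x y)` and `exp (2 t x y)` is a series
of rank-one kernels `(2 t)ⁿ / n! · xⁿ yⁿ` with nonnegative coefficients when `t ≥ 0`.
-/

noncomputable def s (m κ h : ℝ) : ℝ := m * κ ^ ((1 - h) ^ 2) + (1 - m) * κ ^ (h ^ 2)

noncomputable def WD (m κ : ℝ) : ℝ :=
  m ^ 2 + (1 - m) ^ 2 + 2 * m * (1 - m) * κ - (sSup (s m κ '' Set.Icc 0 1)) ^ 2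

open Real Finset

theorem sum_sum_mul_exp_mul_nonneg {ι : Type*} (I : Finset ι) (c x : ι → ℝ) {t : ℝ}
    (ht : 0 ≤ t) : 0 ≤ ∑ i ∈ I, ∑ j ∈ I, c i * c j * exp (t * x i * x j) := by
  have hexp (y : ℝ) : HasSum (fun n => y ^ n / n.factorial) (exp y) :=
    exp_eq_exp_ℝ ▸ NormedSpace.expSeries_div_hasSum_exp y
  have hseries := hasSum_sum (s := I) fun i _ => hasSum_sum (s := I) fun j _ =>
    (hexp (t * x i * x j)).mul_left (c i * c j)
  have hterm (n : ℕ) : ∑ i ∈ I, ∑ j ∈ I, c i * c j * ((t * x i * x j) ^ n / n.factorial) =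
      t ^ n / n.factorial * (∑ i ∈ I, c i * x i ^ n) ^ 2 := by
    rw [sq, sum_mul_sum, mul_sum]
    refine sum_congr rfl fun i _ => ?_
    rw [mul_sum]
    exact sum_congr rfl fun j _ => by ring
  simp only [hterm] at hseries
  exact hseries.nonneg fun n => by positivity

theorem sum_sum_mul_exp_neg_mul_sub_sq_nonneg {ι : Type*} (I : Finset ι) (c x : ι → ℝ) {t : ℝ}
    (ht : 0 ≤ t) : 0 ≤ ∑ i ∈ I, ∑ j ∈ I, c i * c j * exp (-(t * (x i - x j) ^ 2)) := by
  have hfactor : ∀ i j, c i * c j * exp (-(t * (x i - x j) ^ 2)) =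
      (c i * exp (-(t * x i ^ 2))) * (c j * exp (-(t * x j ^ 2))) * exp (2 * t * x i * x j) := by
    intro i j
    rw [show -(t * (x i - x j) ^ 2) = -(t * x i ^ 2) + -(t * x j ^ 2) + 2 * t * x i * x j by ring,
      exp_add, exp_add]
    ring
  simp only [hfactor]
  exact sum_sum_mul_exp_mul_nonneg I _ x (by positivity)

theorem sum_sum_mul_rpow_sub_sq_nonneg {ι : Type*} (I : Finset ι) (c x : ι → ℝ) {κ : ℝ}
    (hκ₀ : 0 < κ) (hκ₁ : κ ≤ 1) : 0 ≤ ∑ i ∈ I, ∑ j ∈ I, c i * c j * κ ^ ((x i - x j) ^ 2) := by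
  have hrpow : ∀ u : ℝ, κ ^ u = exp (-(-log κ * u)) := fun u => by
    rw [rpow_def_of_pos hκ₀, neg_mul, neg_neg]
  simp only [hrpow]
  exact sum_sum_mul_exp_neg_mul_sub_sq_nonneg I c x (neg_nonneg.2 (log_nonpos hκ₀.le hκ₁))

theorem s_sq_le (m : ℝ) {κ : ℝ} (hκ₀ : 0 < κ) (hκ₁ : κ ≤ 1) (h : ℝ) :
    s m κ h ^ 2 ≤ m ^ 2 + (1 - m) ^ 2 + 2 * m * (1 - m) * κ := by
  have hgram := sum_sum_mul_rpow_sub_sq_nonneg univ ![m, 1 - m, -s m κ h] ![1, 0, h] hκ₀ hκ₁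
  simp only [Fin.sum_univ_three, Matrix.cons_val, Matrix.cons_val_zero, Matrix.cons_val_one,
    sub_self, sub_zero, zero_sub, neg_sq, one_pow, zero_pow two_ne_zero, rpow_zero, rpow_one,
    sub_sq_comm h 1] at hgram
  unfold s at *
  linear_combination hgram

theorem sq_sSup_le_of_forall_sq_le {S : Set ℝ} (hS : S.Nonempty) {C : ℝ}
    (hC : ∀ x ∈ S, x ^ 2 ≤ C) : sSup S ^ 2 ≤ C := by
  obtain ⟨x₀, hx₀⟩ := hS
  have hbound : ∀ x ∈ S, |x| ≤ √C := fun x hx => abs_le_sqrt (hC x hx)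
  have hbdd : BddAbove S := ⟨√C, fun x hx => (le_abs_self x).trans (hbound x hx)⟩
  have hupper : sSup S ≤ √C := csSup_le ⟨x₀, hx₀⟩ fun x hx => (le_abs_self x).trans (hbound x hx)
  have hlower : -√C ≤ sSup S := (neg_le_of_abs_le (hbound x₀ hx₀)).trans (le_csSup hbdd hx₀)
  calc sSup S ^ 2 ≤ √C ^ 2 := sq_le_sq' hlower hupper
    _ = C := sq_sqrt ((sq_nonneg x₀).trans (hC x₀ hx₀))

theorem weight_degradation_nonneg_general (m κ : ℝ)
    (hκ : κ ∈ Set.Ioo (0 : ℝ) 1) :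
    (∀ h ∈ Set.Icc (0 : ℝ) 1,
      (s m κ h) ^ 2 ≤ m ^ 2 + (1 - m) ^ 2 + 2 * m * (1 - m) * κ) ∧
    0 ≤ WD m κ := by
  have hpointwise : ∀ h, s m κ h ^ 2 ≤ m ^ 2 + (1 - m) ^ 2 + 2 * m * (1 - m) * κ :=
    s_sq_le m hκ.1 hκ.2.le
  refine ⟨fun h _ => hpointwise h, ?_⟩
  have hsup := sq_sSup_le_of_forall_sq_le (Set.image_nonempty.2 (Set.nonempty_Icc.2 zero_le_one))
    (Set.forall_mem_image.2 fun h _ => hpointwise h)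
  rw [WD]
  linarith

theorem weight_degradation_nonneg (m κ : ℝ)
    (hm : m ∈ Set.Icc (0 : ℝ) 1) (hκ : κ ∈ Set.Ioo (0 : ℝ) 1) :
    (∀ h ∈ Set.Icc (0 : ℝ) 1,
      (s m κ h) ^ 2 ≤ m ^ 2 + (1 - m) ^ 2 + 2 * m * (1 - m) * κ) ∧
    0 ≤ WD m κ :=
  weight_degradation_nonneg_general m κ hκ
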